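/- Let C ⊆ ℝⁿ be a closed convex cone. Then M(C) equals the closure (in the space of real n×n matrices) of the Minkowski sum L + E, where L is the set of matrices A₀ such that exp(tA₀) maps C onto C for every t ∈ ℝ, and E is the set of matrices A₁ with A₁(C) ⊆ C. -/

import Mathlib

open Matrix Pointwise

/-- `A ∈ M(C)`: for every `t ≥ 0` the matrix exponential `exp(tA)` maps `C` into `C`. -/
def memM {n : ℕ} (C : Set (Fin n → ℝ)) (A : Matrix (Fin n) (Fin n) ℝ) : Prop :=
  ∀ t : ℝ, 0 ≤ t → ∀ x ∈ C, (NormedSpace.exp (t • A)).mulVec x ∈ C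

/-!
The matrices `E(C)` mapping the cone `C` into itself form a closed convex cone that is closed
under products, so it contains `exp A` for each of its elements, a limit of partial sums of the
exponential series. Scalar matrices commute with everything, hence `c • 1 + E(C) ⊆ M(C)`, and
`M(C)` is closed. Conversely, for `A ∈ M(C)` the difference quotients
`h⁻¹ (exp (h A) - 1) = -h⁻¹ • 1 + h⁻¹ • exp (h A)` lie in `ℝ • 1 + E(C)` and tend to `A` as
`h → 0⁺`. So `M(C)` is the closure of `ℝ • 1 + E(C)`. Finally `ℝ • 1 ⊆ L ⊆ M(C)` and
`E(C) + E(C) ⊆ E(C)` squeeze the closure of `L + E(C)` between the two.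
-/

open Filter Topology Set

section OfConvex

variable {𝕜 E : Type*} [Field 𝕜] [LinearOrder 𝕜] [IsStrictOrderedRing 𝕜]
  [AddCommGroup E] [Module 𝕜 E]

theorem Convex.add_mem_of_smul_mem {s : Set E} (hs : Convex 𝕜 s)
    (hsmul : ∀ x ∈ s, ∀ t : 𝕜, 0 < t → t • x ∈ s) {x y : E} (hx : x ∈ s) (hy : y ∈ s) :
    x + y ∈ s := by
  have hmid : (2⁻¹ : 𝕜) • x + (2⁻¹ : 𝕜) • y ∈ s :=
    hs hx hy (by positivity) (by positivity) (by norm_num)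
  have h2 : (2 : 𝕜) • ((2⁻¹ : 𝕜) • x + (2⁻¹ : 𝕜) • y) = x + y := by
    simp [smul_add, smul_smul]
  simpa [h2] using hsmul _ hmid 2 two_pos

namespace ConvexCone

def ofConvex (s : Set E) (hs : Convex 𝕜 s) (hsmul : ∀ x ∈ s, ∀ t : 𝕜, 0 < t → t • x ∈ s) :
    ConvexCone 𝕜 E where
  carrier := s
  smul_mem' t ht x hx := hsmul x hx t ht
  add_mem' _ hx _ hy := hs.add_mem_of_smul_mem hsmul hx hy

theorem smul_coe_of_pos (K : ConvexCone 𝕜 E) {c : 𝕜} (hc : 0 < c) : c • (K : Set E) = K := by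
  ext x
  rw [Set.mem_smul_set_iff_inv_smul_mem₀ hc.ne', SetLike.mem_coe, SetLike.mem_coe,
    K.smul_mem_iff (inv_pos.2 hc)]

end ConvexCone

end OfConvex

namespace ConvexCone

section MatrixEnd

variable {R ι : Type*} [CommSemiring R] [PartialOrder R] [Fintype ι]

def matrixEnd (K : ConvexCone R (ι → R)) : ConvexCone R (Matrix ι ι R) where
  carrier := {A | ∀ x ∈ K, A *ᵥ x ∈ K}
  smul_mem' c hc A hA x hx := by
    rw [smul_mulVec]
    exact K.smul_mem hc (hA x hx)
  add_mem' A hA B hB x hx := by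
    rw [add_mulVec]
    exact K.add_mem (hA x hx) (hB x hx)

variable {K : ConvexCone R (ι → R)}

theorem one_mem_matrixEnd [DecidableEq ι] : (1 : Matrix ι ι R) ∈ K.matrixEnd := fun x hx => by
  rwa [one_mulVec]

theorem mul_mem_matrixEnd {A B : Matrix ι ι R} (hA : A ∈ K.matrixEnd) (hB : B ∈ K.matrixEnd) :
    A * B ∈ K.matrixEnd := fun x hx => by
  rw [← mulVec_mulVec]
  exact hA _ (hB x hx)

theorem pow_mem_matrixEnd [DecidableEq ι] {A : Matrix ι ι R} (hA : A ∈ K.matrixEnd) (m : ℕ) :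
    A ^ m ∈ K.matrixEnd := by
  induction m with
  | zero => simpa using one_mem_matrixEnd
  | succ m ih => simpa [pow_succ] using mul_mem_matrixEnd ih hA

theorem isClosed_matrixEnd [TopologicalSpace R] [IsTopologicalSemiring R]
    (hK : IsClosed (K : Set (ι → R))) : IsClosed (K.matrixEnd : Set (Matrix ι ι R)) := by
  have : (K.matrixEnd : Set (Matrix ι ι R)) = ⋂ x ∈ K, (· *ᵥ x) ⁻¹' K := by
    ext A; simp [matrixEnd]
  rw [this]
  exact isClosed_biInter fun x _ => hK.preimage (continuous_id.matrix_mulVec continuous_const)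

end MatrixEnd

end ConvexCone

open scoped Matrix.Norms.Operator Nat

theorem Matrix.exp_smul_one {ι : Type*} [Fintype ι] [DecidableEq ι] (c : ℝ) :
    NormedSpace.exp (c • (1 : Matrix ι ι ℝ)) = Real.exp c • 1 := by
  rw [← Algebra.algebraMap_eq_smul_one, ← Algebra.algebraMap_eq_smul_one, Real.exp_eq_exp_ℝ]
  exact (NormedSpace.algebraMap_exp_comm c).symm

namespace ConvexCone

section Exp

variable {ι : Type*} [Fintype ι] [DecidableEq ι] {K : ConvexCone ℝ (ι → ℝ)}

theorem exp_mem_matrixEnd (hK : IsClosed (K : Set (ι → ℝ))) {A : Matrix ι ι ℝ}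
    (hA : A ∈ K.matrixEnd) : NormedSpace.exp A ∈ K.matrixEnd := by
  -- Sums over `range (N + 1)` are nonempty positive combinations, so `0 ∈ K` is not needed.
  have hpartial : ∀ N : ℕ, ∑ m ∈ Finset.range (N + 1), (m !⁻¹ : ℝ) • A ^ m ∈ K.matrixEnd := by
    intro N
    induction N with
    | zero => simpa using one_mem_matrixEnd
    | succ N ih =>
      rw [Finset.sum_range_succ]
      exact K.matrixEnd.add_mem ih
        (K.matrixEnd.smul_mem (by positivity) (pow_mem_matrixEnd hA _))
  have hlim := (NormedSpace.exp_series_hasSum_exp' (𝕂 := ℝ) A).tendsto_sum_nat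
  refine (isClosed_matrixEnd hK).mem_of_tendsto ((tendsto_add_atTop_iff_nat 1).2 hlim) ?_
  exact Eventually.of_forall hpartial

theorem exp_smul_mem_matrixEnd (hK : IsClosed (K : Set (ι → ℝ))) {A : Matrix ι ι ℝ}
    (hA : A ∈ K.matrixEnd) {t : ℝ} (ht : 0 ≤ t) : NormedSpace.exp (t • A) ∈ K.matrixEnd := by
  rcases ht.eq_or_lt with rfl | ht
  · simpa using one_mem_matrixEnd
  · exact exp_mem_matrixEnd hK (K.matrixEnd.smul_mem ht hA)

theorem image_exp_smul_smul_one_mulVec (t c : ℝ) :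
    (NormedSpace.exp (t • c • (1 : Matrix ι ι ℝ))).mulVec '' K = K := by
  simp only [smul_smul, Matrix.exp_smul_one, smul_mulVec, one_mulVec]
  rw [Set.image_smul, K.smul_coe_of_pos (Real.exp_pos _)]

end Exp

end ConvexCone

section MemM

variable {n : ℕ} {K : ConvexCone ℝ (Fin n → ℝ)}

theorem memM_smul_one_add (hK : IsClosed (K : Set (Fin n → ℝ))) (c : ℝ)
    {A : Matrix (Fin n) (Fin n) ℝ} (hA : A ∈ K.matrixEnd) : memM K (c • 1 + A) := by
  intro t ht
  have hcomm : Commute ((t * c) • (1 : Matrix (Fin n) (Fin n) ℝ)) (t • A) :=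
    (Commute.one_left _).smul_left _
  rw [smul_add, smul_smul, Matrix.exp_add_of_commute _ _ hcomm, Matrix.exp_smul_one,
    smul_one_mul]
  exact K.matrixEnd.smul_mem (Real.exp_pos _) (K.exp_smul_mem_matrixEnd hK hA ht)

theorem isClosed_setOf_memM (hK : IsClosed (K : Set (Fin n → ℝ))) :
    IsClosed {A : Matrix (Fin n) (Fin n) ℝ | memM K A} := by
  have : {A : Matrix (Fin n) (Fin n) ℝ | memM K A} =
      ⋂ t ∈ Ici (0 : ℝ), (fun A => NormedSpace.exp (t • A)) ⁻¹' K.matrixEnd := by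
    ext A
    simp [memM, ConvexCone.matrixEnd]
  rw [this]
  exact isClosed_biInter fun t _ => (K.isClosed_matrixEnd hK).preimage
    (NormedSpace.exp_continuous.comp (continuous_const_smul t))

theorem mem_closure_range_smul_one_add_matrixEnd {A : Matrix (Fin n) (Fin n) ℝ}
    (hA : memM K A) :
    A ∈ closure (range (fun c : ℝ => c • (1 : Matrix (Fin n) (Fin n) ℝ)) +
      (K.matrixEnd : Set _)) := by
  have hderiv : Tendsto (slope (fun u : ℝ => NormedSpace.exp (u • A)) 0) (𝓝[>] 0) (𝓝 A) := by
    have := (hasDerivAt_exp_smul_const (𝕂 := ℝ) A 0).hasDerivWithinAt (s := Ioi 0)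
    rw [hasDerivWithinAt_iff_tendsto_slope' self_notMem_Ioi] at this
    rwa [zero_smul, NormedSpace.exp_zero, one_mul] at this
  refine mem_closure_of_tendsto hderiv ?_
  filter_upwards [self_mem_nhdsWithin] with h (hh : 0 < h)
  rw [slope_def_module, sub_zero, zero_smul, NormedSpace.exp_zero, smul_sub, sub_eq_neg_add,
    ← neg_smul]
  exact add_mem_add ⟨_, rfl⟩ (K.matrixEnd.smul_mem (inv_pos.2 hh) (hA h hh.le))

theorem setOf_memM_eq_closure (hK : IsClosed (K : Set (Fin n → ℝ))) :
    {A | memM K A} =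
      closure (range (fun c : ℝ => c • (1 : Matrix (Fin n) (Fin n) ℝ)) +
        (K.matrixEnd : Set _)) := by
  refine Subset.antisymm (fun A hA => mem_closure_range_smul_one_add_matrixEnd hA) ?_
  refine closure_minimal ?_ (isClosed_setOf_memM hK)
  rintro _ ⟨_, ⟨c, rfl⟩, A, hA, rfl⟩
  exact memM_smul_one_add hK c hA

end MemM

/-- `M(C)` equals the closure of the Minkowski sum `L + E`, where `L` is the set of matrices
`A₀` with `exp(tA₀)` mapping `C` onto `C` for every real `t` and `E` is the set of matrices `A₁`
mapping `C` into `C`. -/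
theorem memM_eq_closure_lieAut_add_end {n : ℕ} (C : Set (Fin n → ℝ))
    (hclosed : IsClosed C) (hconv : Convex ℝ C)
    (hcone : ∀ x ∈ C, ∀ t : ℝ, 0 < t → t • x ∈ C) :
    {A : Matrix (Fin n) (Fin n) ℝ | memM C A} =
      closure ({A₀ : Matrix (Fin n) (Fin n) ℝ |
                  ∀ t : ℝ, (NormedSpace.exp (t • A₀)).mulVec '' C = C} +
               {A₁ : Matrix (Fin n) (Fin n) ℝ | ∀ x ∈ C, A₁.mulVec x ∈ C}) := by
  obtain ⟨K, rfl⟩ : ∃ K : ConvexCone ℝ (Fin n → ℝ), (K : Set (Fin n → ℝ)) = C :=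
    ⟨.ofConvex C hconv hcone, rfl⟩
  set S := range (fun c : ℝ => c • (1 : Matrix (Fin n) (Fin n) ℝ)) + (K.matrixEnd : Set _)
  have hM : {A | memM K A} = closure S := setOf_memM_eq_closure hclosed
  have hS : S ⊆ {A₀ : Matrix (Fin n) (Fin n) ℝ |
      ∀ t : ℝ, (NormedSpace.exp (t • A₀)).mulVec '' K = K} + (K.matrixEnd : Set _) :=
    add_subset_add (range_subset_iff.2 fun c t => ConvexCone.image_exp_smul_smul_one_mulVec t c)
      subset_rfl
  have hSE : S + (K.matrixEnd : Set _) ⊆ S := by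
    rw [add_assoc]
    refine add_subset_add_left ?_
    rintro _ ⟨A, hA, B, hB, rfl⟩
    exact K.matrixEnd.add_mem hA hB
  refine (hM.trans_subset (closure_mono hS)).antisymm ?_
  rw [hM]
  refine closure_minimal ?_ isClosed_closure
  rintro _ ⟨A₀, hA₀, A₁, hA₁, rfl⟩
  have hA₀M : A₀ ∈ closure S := hM ▸ fun t _ x hx => hA₀ t ▸ mem_image_of_mem _ hx
  exact map_mem_closure₂ continuous_add hA₀M (subset_closure hA₁)
    fun A hA B hB => hSE (add_mem_add hA hB)
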